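/- arXiv:1912.09899 — 3 statements merged into one kernel-verified Lean document; each statement's English description precedes it below -/
import Mathlib

section
/- Let X ~ N(x, σ²I) and Y ~ N(x+δ, σ²I) be Gaussian random vectors on ℝ^d, let M : ℝ^d → {0,1} be measurable, and let β ∈ ℝ. (1) If Z = {z ∈ ℝ^d : δᵀz ≤ β} and Pr(M(X) = 1) ≥ Pr(X ∈ Z), then Pr(M(Y) = 1) ≥ Pr(Y ∈ Z). (2) If Z = {z ∈ ℝ^d : δᵀz ≥ β} and Pr(M(X) = 1) ≤ Pr(X ∈ Z), then Pr(M(Y) = 1) ≤ Pr(Y ∈ Z). -/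
open MeasureTheory ProbabilityTheory Real Filter

/-- The standard normal cumulative distribution function Φ. -/
noncomputable def Phi (t : ℝ) : ℝ := (gaussianReal 0 1 (Set.Iic t)).toReal

/-- The inverse Φ⁻¹ of the standard normal CDF (meaningful on (0,1)). -/
noncomputable def PhiInv : ℝ → ℝ := Function.invFun Phi

/-- The Gaussian measure N(m, σ²I) on ℝ^d. -/
noncomputable def gaussianVec {d : ℕ} (m : Fin d → ℝ) (σ : ℝ) :
    Measure (Fin d → ℝ) :=
  Measure.pi fun i => gaussianReal (m i) (Real.toNNReal (σ ^ 2))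

/-- Dot product on ℝ^d. -/
def dotp {d : ℕ} (a b : Fin d → ℝ) : ℝ := ∑ i, a i * b i

/-- Euclidean (ℓ₂) norm on ℝ^d. -/
noncomputable def l2norm {d : ℕ} (a : Fin d → ℝ) : ℝ := Real.sqrt (∑ i, a i ^ 2)

/-!
The law `ν` of `x + δ + ε` has density `g (δᵀz)` with respect to the law `μ` of `x + ε`, where
`g s = exp ((s - δᵀx - ‖δ‖²/2) / σ²)` is nondecreasing. For `A = {δᵀz ≤ β}` and any `B`, the
density is `≤ r := g β` on `A \ B` and `≥ r` on `B \ A`. Since `μ A ≤ μ B` means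
`μ (A \ B) ≤ μ (B \ A)`, we get `ν (A \ B) ≤ r μ (A \ B) ≤ r μ (B \ A) ≤ ν (B \ A)`, i.e.
`ν A ≤ ν B`; the half-space `{δᵀz ≥ β}` is handled symmetrically.
-/

open scoped ENNReal NNReal

namespace MeasureTheory

section Pi

variable {ι : Type*} [Fintype ι] {α : ι → Type*} [∀ i, MeasurableSpace (α i)]
  (μ : ∀ i, Measure (α i)) [∀ i, SigmaFinite (μ i)] {f : ∀ i, α i → ℝ≥0∞}

theorem lmarginal_prod_apply [DecidableEq ι] (hf : ∀ i, Measurable (f i)) (s : Finset ι)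
    (x : ∀ i, α i) :
    (∫⋯∫⁻_s, (fun z ↦ ∏ i, f i (z i)) ∂μ) x
      = (∏ i ∈ sᶜ, f i (x i)) * ∏ i ∈ s, ∫⁻ t, f i t ∂μ i := by
  induction s using Finset.induction_on generalizing x with
  | empty => simp
  | @insert a s ha ih =>
    have hmeas : Measurable fun z : ∀ i, α i ↦ ∏ i, f i (z i) := by fun_prop
    have hslice : ∀ t, ∏ i ∈ sᶜ, f i (Function.update x a t i)
        = f a t * ∏ i ∈ (insert a s)ᶜ, f i (x i) := fun t ↦ by
      simp_rw [Function.apply_update f, Finset.prod_update_of_mem (Finset.mem_compl.2 ha),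
        Finset.compl_insert, Finset.sdiff_singleton_eq_erase]
    simp_rw [lmarginal_insert _ hmeas ha, ih, hslice, mul_assoc]
    rw [lintegral_mul_const _ (hf a), Finset.prod_insert ha]
    ring

theorem lintegral_fintype_prod_eq_prod (hf : ∀ i, Measurable (f i)) :
    ∫⁻ z, ∏ i, f i (z i) ∂Measure.pi μ = ∏ i, ∫⁻ t, f i t ∂μ i := by
  classical
  rcases isEmpty_or_nonempty (∀ i, α i) with hα | ⟨⟨x⟩⟩
  · obtain ⟨i, hi⟩ := isEmpty_pi.1 hα
    rw [lintegral_of_isEmpty, Finset.prod_eq_zero (Finset.mem_univ i) (lintegral_of_isEmpty _ _)]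
  · rw [lintegral_eq_lmarginal_univ x, lmarginal_prod_apply μ hf]
    simp

theorem Measure.pi_withDensity (hf : ∀ i, Measurable (f i))
    [∀ i, SigmaFinite ((μ i).withDensity (f i))] :
    Measure.pi (fun i ↦ (μ i).withDensity (f i))
      = (Measure.pi μ).withDensity fun z ↦ ∏ i, f i (z i) := by
  refine Measure.pi_eq fun s hs ↦ ?_
  rw [withDensity_apply _ (.univ_pi hs), Measure.restrict_pi_pi,
    lintegral_fintype_prod_eq_prod _ hf]
  exact Finset.prod_congr rfl fun i _ ↦ (withDensity_apply _ (hs i)).symm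

end Pi

section NeymanPearson

variable {α : Type*} [MeasurableSpace α] {μ : Measure α} {A B : Set α}

theorem measure_le_of_measure_sdiff_le (hA : MeasurableSet A) (hB : MeasurableSet B)
    (h : μ (A \ B) ≤ μ (B \ A)) : μ A ≤ μ B := by
  rw [← measure_inter_add_sdiff A hB, ← measure_inter_add_sdiff B hA, Set.inter_comm B A]
  gcongr

theorem measure_sdiff_le_of_measure_le [IsFiniteMeasure μ] (hA : MeasurableSet A)
    (hB : MeasurableSet B) (h : μ A ≤ μ B) : μ (A \ B) ≤ μ (B \ A) := by
  rw [← measure_inter_add_sdiff A hB, ← measure_inter_add_sdiff B hA, Set.inter_comm B A] at h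
  exact (ENNReal.add_le_add_iff_left (measure_ne_top μ _)).1 h

theorem withDensity_le_withDensity_of_forall_le_of_forall_ge {ρ : α → ℝ≥0∞} {r : ℝ≥0∞}
    (hA : MeasurableSet A) (hB : MeasurableSet B)
    (hρA : ∀ z ∈ A, ρ z ≤ r) (hρB : ∀ z ∈ B, r ≤ ρ z) (h : μ A ≤ μ B) :
    μ.withDensity ρ A ≤ μ.withDensity ρ B :=
  calc μ.withDensity ρ A = ∫⁻ z in A, ρ z ∂μ := withDensity_apply _ hA
    _ ≤ ∫⁻ _ in A, r ∂μ := setLIntegral_mono' hA hρA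
    _ = r * μ A := setLIntegral_const _ _
    _ ≤ r * μ B := by gcongr
    _ = ∫⁻ _ in B, r ∂μ := (setLIntegral_const _ _).symm
    _ ≤ ∫⁻ z in B, ρ z ∂μ := setLIntegral_mono' hB hρB
    _ = μ.withDensity ρ B := (withDensity_apply _ hB).symm

variable [IsFiniteMeasure μ] {T : α → ℝ} {g : ℝ → ℝ≥0∞} {β : ℝ}

theorem withDensity_sublevel_le_of_monotone (hT : Measurable T) (hg : Monotone g)
    (hB : MeasurableSet B) (h : μ {z | T z ≤ β} ≤ μ B) :
    μ.withDensity (fun z ↦ g (T z)) {z | T z ≤ β} ≤ μ.withDensity (fun z ↦ g (T z)) B := by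
  have hA : MeasurableSet {z | T z ≤ β} := measurableSet_le hT measurable_const
  refine measure_le_of_measure_sdiff_le hA hB ?_
  exact withDensity_le_withDensity_of_forall_le_of_forall_ge (hA.diff hB) (hB.diff hA)
    (r := g β) (fun z hz ↦ hg hz.1) (fun z hz ↦ hg (not_le.1 hz.2).le)
    (measure_sdiff_le_of_measure_le hA hB h)

theorem withDensity_le_superlevel_of_monotone (hT : Measurable T) (hg : Monotone g)
    (hB : MeasurableSet B) (h : μ B ≤ μ {z | β ≤ T z}) :
    μ.withDensity (fun z ↦ g (T z)) B ≤ μ.withDensity (fun z ↦ g (T z)) {z | β ≤ T z} := by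
  have hA : MeasurableSet {z | β ≤ T z} := measurableSet_le measurable_const hT
  refine measure_le_of_measure_sdiff_le hB hA ?_
  exact withDensity_le_withDensity_of_forall_le_of_forall_ge (hB.diff hA) (hA.diff hB)
    (r := g β) (fun z hz ↦ hg (not_le.1 hz.2).le) (fun z hz ↦ hg hz.1)
    (measure_sdiff_le_of_measure_le hB hA h)

end NeymanPearson

end MeasureTheory

namespace ProbabilityTheory

theorem gaussianReal_add_eq_withDensity {v : ℝ≥0} (hv : v ≠ 0) (m a : ℝ) :
    gaussianReal (m + a) v = (gaussianReal m v).withDensity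
      fun t ↦ ENNReal.ofReal (rexp ((a * (t - m) - a ^ 2 / 2) / v)) := by
  rw [gaussianReal_of_var_ne_zero _ hv, gaussianReal_of_var_ne_zero _ hv,
    ← withDensity_mul _ (measurable_gaussianPDF _ _) (by fun_prop)]
  congr 1
  funext t
  have hexp : -(t - (m + a)) ^ 2 / (2 * v)
      = -(t - m) ^ 2 / (2 * v) + (a * (t - m) - a ^ 2 / 2) / v := by
    field_simp
    ring
  rw [Pi.mul_apply, gaussianPDF, gaussianPDF, ← ENNReal.ofReal_mul (gaussianPDFReal_nonneg _ _ _),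
    gaussianPDFReal, gaussianPDFReal, hexp, exp_add, ← mul_assoc]

end ProbabilityTheory

instance {d : ℕ} (m : Fin d → ℝ) (σ : ℝ) : IsProbabilityMeasure (gaussianVec m σ) := by
  unfold gaussianVec
  infer_instance

theorem gaussianVec_add_eq_withDensity {d : ℕ} {σ : ℝ} (hσ : σ ≠ 0) (x δ : Fin d → ℝ) :
    gaussianVec (x + δ) σ = (gaussianVec x σ).withDensity fun z ↦
      ENNReal.ofReal (rexp ((dotp δ z - dotp δ x - dotp δ δ / 2) / σ ^ 2)) := by
  have hv : (σ ^ 2).toNNReal ≠ 0 := by simpa using hσ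
  have hσv : ((σ ^ 2).toNNReal : ℝ) = σ ^ 2 := Real.coe_toNNReal _ (sq_nonneg σ)
  have : ∀ i, SigmaFinite ((gaussianReal (x i) (σ ^ 2).toNNReal).withDensity fun t ↦
      ENNReal.ofReal (rexp ((δ i * (t - x i) - δ i ^ 2 / 2) / (σ ^ 2).toNNReal))) := fun i ↦ by
    rw [← gaussianReal_add_eq_withDensity hv]
    infer_instance
  simp_rw [gaussianVec, Pi.add_apply, gaussianReal_add_eq_withDensity hv]
  rw [Measure.pi_withDensity _ fun i ↦ by fun_prop]
  congr 1
  funext z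
  rw [← ENNReal.ofReal_prod_of_nonneg fun i _ ↦ (exp_pos _).le, ← exp_sum, ← Finset.sum_div, hσv]
  simp only [dotp, Finset.sum_sub_distrib, mul_sub, Finset.sum_div, sq]

theorem neyman_pearson_gaussian_general
    {d : ℕ} (σ : ℝ) (hσ : 0 < σ) (x δ : Fin d → ℝ)
    (M : (Fin d → ℝ) → Bool) (hM : Measurable M) (β : ℝ) :
    (gaussianVec x σ {z | dotp δ z ≤ β} ≤ gaussianVec x σ {z | M z = true} →
      gaussianVec (x + δ) σ {z | dotp δ z ≤ β} ≤
        gaussianVec (x + δ) σ {z | M z = true}) ∧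
    (gaussianVec x σ {z | M z = true} ≤ gaussianVec x σ {z | β ≤ dotp δ z} →
      gaussianVec (x + δ) σ {z | M z = true} ≤
        gaussianVec (x + δ) σ {z | β ≤ dotp δ z}) := by
  have hdot : Measurable (dotp δ) := by
    unfold dotp
    fun_prop
  have hratio : Monotone fun s ↦ ENNReal.ofReal (rexp ((s - dotp δ x - dotp δ δ / 2) / σ ^ 2)) :=
    fun s t hst ↦ ENNReal.ofReal_le_ofReal (exp_le_exp.2 (by gcongr))
  have hM' : MeasurableSet {z | M z = true} := hM (measurableSet_singleton true)
  rw [gaussianVec_add_eq_withDensity hσ.ne' x δ]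
  exact ⟨fun h ↦ (withDensity_sublevel_le_of_monotone hdot hratio hM' h :),
    fun h ↦ (withDensity_le_superlevel_of_monotone hdot hratio hM' h :)⟩

/-- **Neyman–Pearson for Gaussians with different means** (Lemma 1).
Let X ~ N(x, σ²I), Y ~ N(x+δ, σ²I), M : ℝ^d → {0,1} measurable and β ∈ ℝ.
(1) If Z = {z : δᵀz ≤ β} and Pr(M(X)=1) ≥ Pr(X ∈ Z), then
    Pr(M(Y)=1) ≥ Pr(Y ∈ Z).
(2) If Z = {z : δᵀz ≥ β} and Pr(M(X)=1) ≤ Pr(X ∈ Z), then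
    Pr(M(Y)=1) ≤ Pr(Y ∈ Z). -/
theorem neyman_pearson_gaussian
    {d : ℕ} (hd : 1 ≤ d) (σ : ℝ) (hσ : 0 < σ) (x δ : Fin d → ℝ)
    (M : (Fin d → ℝ) → Bool) (hM : Measurable M) (β : ℝ) :
    (gaussianVec x σ {z | dotp δ z ≤ β} ≤ gaussianVec x σ {z | M z = true} →
      gaussianVec (x + δ) σ {z | dotp δ z ≤ β} ≤
        gaussianVec (x + δ) σ {z | M z = true}) ∧
    (gaussianVec x σ {z | M z = true} ≤ gaussianVec x σ {z | β ≤ dotp δ z} →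
      gaussianVec (x + δ) σ {z | M z = true} ≤
        gaussianVec (x + δ) σ {z | β ≤ dotp δ z}) :=
  neyman_pearson_gaussian_general σ hσ x δ M hM β
end

section
/- Let k ≥ 1 be an integer, let p̲_l ∈ (0,1), and let p̄_{b_1} ≤ … ≤ p̄_{b_k} be reals with p̄_{S_t} := Σ_{j=1}^t p̄_{b_j} ∈ (0,1) for every t ∈ {1,…,k}. Assume p̲_l + Σ_{j=1}^k p̄_{b_j} ≤ 1, and let R_l be the unique real number satisfying Φ(Φ⁻¹(p̲_l) − R_l/σ) − min_{1≤t≤k} Φ(Φ⁻¹(p̄_{S_t}) + R_l/σ)/t = 0. Then for every δ ∈ ℝ^d with δ ≠ 0 and ‖δ‖₂ > R_l, defining A_l = {z ∈ ℝ^d : δᵀ(z−x) ≤ σ‖δ‖₂ Φ⁻¹(p̲_l)} and B_{S_t} = {z ∈ ℝ^d : δᵀ(z−x) ≥ σ‖δ‖₂ Φ⁻¹(1−p̄_{S_t})}, there exist k pairwise disjoint measurable sets C_1,…,C_k ⊆ ℝ^d \ A_l such that for every j ∈ {1,…,k}, Pr(X ∈ C_j) = p̄_{b_j} and Pr(Y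 ∈ C_j) ≥ min_{1≤t≤k} Pr(Y ∈ B_{S_t})/t. -/
open MeasureTheory ProbabilityTheory Real Filter

/-!
Project onto the direction `δ`: the level `u z = 1 - Φ (δᵀ(z - x) / (σ‖δ‖))` is uniform on
`(0, 1]` under `X`, each `B_{S_t}` is `{u ≤ p̄_{S_t}}`, and `u < 1 - p̲_l` keeps `z` out of `A_l`.
So it suffices to find disjoint `K_j ⊆ (0, Σ p̄]` of Lebesgue measure `p̄_{b_j}`, each carrying
mass at least `m = min_t ν(0, p̄_{S_t}] / t` for the atomless law `ν` of `u` under `Y`, and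
to pull them back along `u`, dropping the null level `u = 1 - p̲_l`.

The `K_j` are built by induction on `k`. By the intermediate value theorem some window
`(s, s + p̄_{b_1}]` below `Σ_{j ≥ 2} p̄_{b_j}` has `ν`-mass exactly `m`, unless every window has
mass above `m`, in which case the top one is taken. That window is `K_1`; cutting it out of the
line and closing the gap leaves a measure that still satisfies the prefix-mass hypothesis for
the remaining weights, because the weights are nondecreasing.
-/

open Set Function
open scoped ENNReal NNReal

lemma measureReal_Iic_add_Ioc (ν : Measure ℝ) [IsFiniteMeasure ν] {a b : ℝ} (hab : a ≤ b) :
    ν.real (Iic a) + ν.real (Ioc a b) = ν.real (Iic b) := by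
  rw [← measureReal_union (Iic_disjoint_Ioc le_rfl) measurableSet_Ioc, Iic_union_Ioc_eq_Iic hab]

lemma continuous_measureReal_Iic (ν : Measure ℝ) [IsFiniteMeasure ν] [NullSingletonClass ν] :
    Continuous fun x => ν.real (Iic x) := by
  have h : (fun x => ν.real (Iic x)) = fun x => ν.real (Iic 0) + ∫ _ in (0 : ℝ)..x, (1 : ℝ) ∂ν := by
    ext x
    rw [intervalIntegral.integral_const', smul_eq_mul, mul_one]
    rcases le_total 0 x with hx | hx
    · rw [Ioc_eq_empty_of_le hx, measureReal_empty, sub_zero, measureReal_Iic_add_Ioc ν hx]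
    · rw [Ioc_eq_empty_of_le hx, measureReal_empty, ← measureReal_Iic_add_Ioc ν hx]
      ring
  rw [h]
  exact continuous_const.add
    (intervalIntegral.continuous_primitive (fun _ _ => intervalIntegrable_const) 0)

lemma continuous_measureReal_Ioc_add (ν : Measure ℝ) [IsFiniteMeasure ν] [NullSingletonClass ν]
    {a : ℝ} (ha : 0 ≤ a) : Continuous fun s => ν.real (Ioc s (s + a)) := by
  have h : (fun s => ν.real (Ioc s (s + a))) = fun s => ν.real (Iic (s + a)) - ν.real (Iic s) := by
    ext s
    rw [← measureReal_Iic_add_Ioc ν (le_add_of_nonneg_right ha)]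
    ring
  rw [h]
  exact ((continuous_measureReal_Iic ν).comp (continuous_add_const a)).sub
    (continuous_measureReal_Iic ν)

instance : NullSingletonClass (gaussianReal 0 1) := nullSingletonClass_gaussianReal one_ne_zero

lemma continuous_Phi : Continuous Phi := continuous_measureReal_Iic (gaussianReal 0 1)

lemma strictMono_Phi : StrictMono Phi := by
  intro a b hab
  have hpos : 0 < (gaussianReal 0 1).real (Ioc a b) := by
    refine ENNReal.toReal_pos (fun h => ?_) (measure_ne_top _ _)
    have := gaussianReal_absolutelyContinuous' 0 one_ne_zero h
    rw [Real.volume_Ioc, ENNReal.ofReal_eq_zero] at this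
    linarith
  have := measureReal_Iic_add_Ioc (gaussianReal 0 1) hab.le
  change (gaussianReal 0 1).real (Iic a) < (gaussianReal 0 1).real (Iic b)
  linarith

lemma measurable_one_sub_Phi : Measurable fun t => 1 - Phi t :=
  continuous_Phi.measurable.const_sub 1

lemma Phi_pos (t : ℝ) : 0 < Phi t :=
  measureReal_nonneg.trans_lt (strictMono_Phi (sub_one_lt t))

lemma Phi_lt_one (t : ℝ) : Phi t < 1 :=
  (strictMono_Phi (lt_add_one t)).trans_le measureReal_le_one

lemma Phi_PhiInv {p : ℝ} (hp : p ∈ Ioo 0 1) : Phi (PhiInv p) = p := by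
  have hcdf : Phi = cdf (gaussianReal 0 1) := funext fun t => (cdf_eq_real _ t).symm
  refine Function.invFun_eq (mem_range_of_exists_le_of_exists_ge continuous_Phi ?_ ?_)
  · obtain ⟨t, ht⟩ := ((hcdf ▸ tendsto_cdf_atBot _).eventually_lt_const hp.1).exists
    exact ⟨t, ht.le⟩
  · obtain ⟨t, ht⟩ := ((hcdf ▸ tendsto_cdf_atTop _).eventually_const_lt hp.2).exists
    exact ⟨t, ht.le⟩

lemma PhiInv_le_iff {p : ℝ} (hp : p ∈ Ioo 0 1) {t : ℝ} : PhiInv p ≤ t ↔ p ≤ Phi t := by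
  rw [← strictMono_Phi.le_iff_le, Phi_PhiInv hp]

lemma one_sub_Phi_le_iff {p : ℝ} (hp : p ∈ Ioo 0 1) {t : ℝ} :
    1 - Phi t ≤ p ↔ PhiInv (1 - p) ≤ t := by
  rw [PhiInv_le_iff ⟨by linarith [hp.2], by linarith [hp.1]⟩]
  constructor <;> intro h <;> linarith

lemma map_one_sub_Phi_gaussianReal :
    (gaussianReal 0 1).map (fun t => 1 - Phi t) = volume.restrict (Ioc 0 1) := by
  have : IsProbabilityMeasure (volume.restrict (Ioc (0 : ℝ) 1)) :=
    ⟨by simp [Real.volume_Ioc]⟩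
  refine Measure.ext_of_Iic _ _ fun b => ?_
  rw [Measure.map_apply measurable_one_sub_Phi measurableSet_Iic,
    Measure.restrict_apply measurableSet_Iic]
  rcases le_or_gt b 0 with hb | hb
  · have hempty : (fun t => 1 - Phi t) ⁻¹' Iic b = ∅ :=
      eq_empty_of_forall_notMem fun t ht => by
        simp only [mem_preimage, mem_Iic] at ht; linarith [Phi_lt_one t]
    rw [hempty, (Iic_disjoint_Ioc hb).inter_eq]
    simp
  rcases lt_or_ge b 1 with hb1 | hb1
  · have hpre : (fun t => 1 - Phi t) ⁻¹' Iic b = (Iio (PhiInv (1 - b)))ᶜ := by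
      ext t; simp [one_sub_Phi_le_iff ⟨hb, hb1⟩]
    rw [hpre, prob_compl_eq_one_sub measurableSet_Iio, measure_congr Iio_ae_eq_Iic,
      ← ofReal_measureReal, show (gaussianReal 0 1).real (Iic _) = Phi _ from rfl,
      Phi_PhiInv ⟨by linarith, by linarith⟩, ← ENNReal.ofReal_one,
      ← ENNReal.ofReal_sub _ (by linarith), Iic_inter_Ioc_of_le hb1.le, Real.volume_Ioc]
    ring_nf
  · have huniv : (fun t => 1 - Phi t) ⁻¹' Iic b = univ :=
      eq_univ_of_forall fun t => by
        simp only [mem_preimage, mem_Iic]; linarith [Phi_pos t]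
    rw [huniv, inter_eq_self_of_subset_right (Ioc_subset_Iic_self.trans (Iic_subset_Iic.2 hb1))]
    simp [Real.volume_Ioc]

lemma map_sum_mul_pi_gaussianReal {ι : Type*} [Fintype ι] (c μ : ι → ℝ) (v : ι → ℝ≥0) :
    (Measure.pi fun i => gaussianReal (μ i) (v i)).map (fun z => ∑ i, c i * z i)
      = gaussianReal (∑ i, c i * μ i) (∑ i, NNReal.mk (c i ^ 2) (sq_nonneg _) * v i) := by
  have hlaw : ∀ i, (Measure.pi fun i => gaussianReal (μ i) (v i)).map (fun z => c i * z i)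
      = gaussianReal (c i * μ i) (NNReal.mk (c i ^ 2) (sq_nonneg _) * v i) := fun i => by
    rw [← gaussianReal_map_const_mul,
      ← (measurePreserving_eval (fun i => gaussianReal (μ i) (v i)) i).map_eq,
      Measure.map_map (measurable_const_mul (c i)) (measurable_pi_apply i)]
    rfl
  refine Measure.ext_of_charFun (funext fun t => ?_)
  rw [(iIndepFun_pi (X := fun i y => c i * y) fun i => by fun_prop).charFun_map_fun_sum_eq_prod
    (fun i => ((measurable_pi_apply i).const_mul (c i)).aemeasurable)]
  simp_rw [hlaw, Finset.prod_apply, charFun_gaussianReal]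
  rw [← Complex.exp_sum]
  congr 1
  push_cast
  simp only [Finset.sum_sub_distrib, Finset.sum_div, Finset.mul_sum, Finset.sum_mul]

lemma l2norm_pos {d : ℕ} {c : Fin d → ℝ} (hc : c ≠ 0) : 0 < l2norm c := by
  obtain ⟨i, hi⟩ := Function.ne_iff.mp hc
  exact Real.sqrt_pos.2 (Finset.sum_pos' (fun j _ => sq_nonneg (c j))
    ⟨i, Finset.mem_univ i, pow_two_pos_of_ne_zero hi⟩)

lemma map_dotp_sub_gaussianVec {d : ℕ} (c m x : Fin d → ℝ) (σ : ℝ) :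
    (gaussianVec m σ).map (fun z => dotp c (z - x))
      = gaussianReal (dotp c (m - x)) ((σ * l2norm c) ^ 2).toNNReal := by
  have hsplit : (fun z => dotp c (z - x)) = (· - dotp c x) ∘ fun z => ∑ i, c i * z i := by
    ext z; simp [dotp, mul_sub]
  rw [hsplit, ← Measure.map_map (measurable_sub_const _) (by fun_prop), gaussianVec,
    map_sum_mul_pi_gaussianReal, gaussianReal_map_sub_const]
  congr 1
  · simp [dotp, mul_sub]
  · ext
    simp [l2norm, mul_pow, Real.sq_sqrt (Finset.sum_nonneg fun i _ => sq_nonneg (c i)),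
      max_eq_left (sq_nonneg σ), Finset.mul_sum, mul_comm]
    positivity

instance inst_s9 {d : ℕ} (m : Fin d → ℝ) (σ : ℝ) : IsProbabilityMeasure (gaussianVec m σ) := by
  unfold gaussianVec; infer_instance

/-- The `gaussianVec x σ`-mass of the half-space `{w | dotp δ (z - x) ≤ dotp δ (w - x)}`. -/
noncomputable def upperTail {d : ℕ} (δ x : Fin d → ℝ) (σ : ℝ) (z : Fin d → ℝ) : ℝ :=
  1 - Phi (dotp δ (z - x) / (σ * l2norm δ))

lemma measurable_dotp_sub {d : ℕ} (c x : Fin d → ℝ) : Measurable fun z => dotp c (z - x) := by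
  unfold dotp; fun_prop

section UpperTail

variable {d : ℕ} {δ x : Fin d → ℝ} {σ : ℝ}

lemma upperTail_eq_comp : upperTail δ x σ
    = (fun t => 1 - Phi t) ∘ (· / (σ * l2norm δ)) ∘ fun z => dotp δ (z - x) := rfl

lemma measurable_upperTail : Measurable (upperTail δ x σ) :=
  measurable_one_sub_Phi.comp ((measurable_div_const _).comp (measurable_dotp_sub δ x))

lemma upperTail_pos (z : Fin d → ℝ) : 0 < upperTail δ x σ z :=
  sub_pos.2 (Phi_lt_one _)

variable (hs : 0 < σ * l2norm δ)
include hs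

lemma map_upperTail_gaussianVec :
    (gaussianVec x σ).map (upperTail δ x σ) = volume.restrict (Ioc 0 1) := by
  rw [upperTail_eq_comp, ← Measure.map_map measurable_one_sub_Phi
      ((measurable_div_const _).comp (measurable_dotp_sub δ x)),
    ← Measure.map_map (measurable_div_const _) (measurable_dotp_sub δ x),
    map_dotp_sub_gaussianVec, gaussianReal_map_div_const, ← map_one_sub_Phi_gaussianReal]
  congr 2
  · simp [dotp]
  · ext; simp [sq_nonneg, (pow_pos hs 2).ne']

lemma nullSingletonClass_map_upperTail (m : Fin d → ℝ) :
    NullSingletonClass ((gaussianVec m σ).map (upperTail δ x σ)) := by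
  have hinj : Injective fun t => 1 - Phi (t / (σ * l2norm δ)) := fun t u h =>
    (div_left_inj' hs.ne').1 (strictMono_Phi.injective (sub_right_injective h))
  have hvar : ((σ * l2norm δ) ^ 2).toNNReal ≠ 0 := by
    rw [Ne, Real.toNNReal_eq_zero, not_le]; exact pow_pos hs 2
  have := nullSingletonClass_gaussianReal (μ := dotp δ (m - x)) hvar
  refine ⟨fun b => ?_⟩
  rw [upperTail_eq_comp, ← comp_assoc, ← Measure.map_map
      (measurable_one_sub_Phi.comp (measurable_div_const _)) (measurable_dotp_sub δ x),
    map_dotp_sub_gaussianVec, Measure.map_apply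
      (measurable_one_sub_Phi.comp (measurable_div_const _)) (measurableSet_singleton b)]
  exact (subsingleton_singleton.preimage hinj).measure_zero _

lemma upperTail_preimage_Ioc {p : ℝ} (hp : p ∈ Ioo 0 1) :
    {z | σ * l2norm δ * PhiInv (1 - p) ≤ dotp δ (z - x)} = upperTail δ x σ ⁻¹' Ioc 0 p := by
  ext z
  rw [mem_preimage, mem_Ioc, and_iff_right (upperTail_pos z), upperTail, one_sub_Phi_le_iff hp,
    le_div_iff₀ hs, mul_comm, mem_ofPred_eq]

lemma measureReal_upperTail_preimage {K : Set ℝ} (hK : MeasurableSet K) (hK1 : K ⊆ Ioc 0 1) :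
    (gaussianVec x σ).real (upperTail δ x σ ⁻¹' K) = volume.real K := by
  rw [← map_measureReal_apply measurable_upperTail hK, map_upperTail_gaussianVec hs,
    measureReal_restrict_apply hK, inter_eq_left.2 hK1]

lemma notMem_of_upperTail_lt {p : ℝ} (hp : p ∈ Ioo 0 1) {z : Fin d → ℝ}
    (hz : upperTail δ x σ z < 1 - p) :
    z ∉ {z | dotp δ (z - x) ≤ σ * l2norm δ * PhiInv p} := by
  intro (hle : dotp δ (z - x) ≤ σ * l2norm δ * PhiInv p)
  have : Phi (dotp δ (z - x) / (σ * l2norm δ)) ≤ p := by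
    rw [← Phi_PhiInv hp]
    exact strictMono_Phi.monotone ((div_le_iff₀ hs).2 (by linarith))
  simp only [upperTail] at hz
  linarith

end UpperTail

def prefixSum {k : ℕ} (a : Fin k → ℝ) (t : Fin k) : ℝ :=
  ∑ i ∈ Finset.univ.filter (· ≤ t), a i

section PrefixSum

variable {k : ℕ}

lemma prefixSum_zero (a : Fin (k + 1) → ℝ) : prefixSum a 0 = a 0 := by
  rw [prefixSum, Finset.sum_filter, Fin.sum_univ_succ]
  simp [Fin.succ_ne_zero]

lemma prefixSum_succ (a : Fin (k + 1) → ℝ) (t : Fin k) :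
    prefixSum a t.succ = a 0 + prefixSum (Fin.tail a) t := by
  rw [prefixSum, prefixSum, Finset.sum_filter, Finset.sum_filter, Fin.sum_univ_succ]
  simp [Fin.succ_le_succ_iff, Fin.tail]

lemma prefixSum_castSucc_le_tail {a : Fin (k + 1) → ℝ} (ha : Monotone a) (t : Fin k) :
    prefixSum a t.castSucc ≤ prefixSum (Fin.tail a) t := by
  rw [prefixSum, prefixSum, Finset.sum_filter, Finset.sum_filter, Fin.sum_univ_castSucc]
  simp only [Fin.castSucc_le_castSucc_iff, Fin.tail, if_neg (Fin.castSucc_lt_last t).not_ge,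
    add_zero]
  exact Finset.sum_le_sum fun i _ => by split_ifs <;> simp [ha (Fin.castSucc_le_succ i)]

lemma prefixSum_le_sum {a : Fin k → ℝ} (ha : ∀ i, 0 ≤ a i) (t : Fin k) :
    prefixSum a t ≤ ∑ i, a i :=
  Finset.sum_le_sum_of_subset_of_nonneg (Finset.filter_subset _ _) fun i _ _ => ha i

end PrefixSum

noncomputable def windowCollapse (s a z : ℝ) : ℝ := if z ≤ s then z else z - a

namespace MeasureTheory.Measure

noncomputable def removeWindow (ν : Measure ℝ) (s a : ℝ) : Measure ℝ :=
  (ν.restrict (Ioc s (s + a))ᶜ).map (windowCollapse s a)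

end MeasureTheory.Measure

section RemoveWindow

variable {s a : ℝ}

lemma measurable_windowCollapse : Measurable (windowCollapse s a) :=
  Measurable.ite measurableSet_Iic measurable_id (measurable_id.sub_const a)

lemma removeWindow_apply (ν : Measure ℝ) {A : Set ℝ} (hA : MeasurableSet A) :
    ν.removeWindow s a A = ν (windowCollapse s a ⁻¹' A \ Ioc s (s + a)) := by
  rw [Measure.removeWindow, Measure.map_apply measurable_windowCollapse hA,
    Measure.restrict_apply (measurable_windowCollapse hA), sdiff_eq]

lemma removeWindow_real_apply (ν : Measure ℝ) {A : Set ℝ} (hA : MeasurableSet A) :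
    (ν.removeWindow s a).real A = ν.real (windowCollapse s a ⁻¹' A \ Ioc s (s + a)) := by
  simp only [measureReal_def, removeWindow_apply ν hA]

instance (ν : Measure ℝ) [IsFiniteMeasure ν] : IsFiniteMeasure (ν.removeWindow s a) := by
  unfold Measure.removeWindow; infer_instance

lemma windowCollapse_preimage_Ioc_of_le {y : ℝ} (hy : y ≤ s) :
    windowCollapse s a ⁻¹' Ioc 0 y \ Ioc s (s + a) = Ioc 0 y := by
  ext z
  simp only [windowCollapse, Set.mem_sdiff, mem_preimage, mem_Ioc]
  split_ifs with hz
  · exact ⟨fun h => h.1, fun h => ⟨h, fun h' => by linarith [h'.1]⟩⟩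
  · refine ⟨fun h => ?_, fun h => by linarith [h.2]⟩
    exact absurd ⟨not_le.mp hz, by linarith [h.1.2]⟩ h.2

lemma windowCollapse_preimage_Ioc_of_lt {y : ℝ} (hs : 0 ≤ s) (ha : 0 ≤ a) (hy : s < y) :
    windowCollapse s a ⁻¹' Ioc 0 y \ Ioc s (s + a) = Ioc 0 (y + a) \ Ioc s (s + a) := by
  ext z
  simp only [windowCollapse, Set.mem_sdiff, mem_preimage, mem_Ioc]
  split_ifs with hz
  · exact ⟨fun h => ⟨⟨h.1.1, by linarith⟩, h.2⟩, fun h => ⟨⟨h.1.1, by linarith⟩, h.2⟩⟩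
  · refine ⟨fun h => ⟨⟨by linarith [h.1.1], by linarith [h.1.2]⟩, h.2⟩,
      fun h => ⟨⟨?_, by linarith [h.1.2]⟩, h.2⟩⟩
    by_contra h'
    exact h.2 ⟨not_le.mp hz, by linarith⟩

lemma windowCollapse_preimage_sdiff_subset {A : Set ℝ} {M : ℝ} (hs : 0 ≤ s) (ha : 0 ≤ a)
    (hA : A ⊆ Ioc 0 M) : windowCollapse s a ⁻¹' A \ Ioc s (s + a) ⊆ Ioc 0 (M + a) := by
  intro z ⟨hz, hzW⟩
  have hzA := hA hz
  simp only [windowCollapse, mem_Ioc] at hzA hzW ⊢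
  split_ifs at hzA with h
  · exact ⟨hzA.1, by linarith [hzA.2]⟩
  · exact ⟨by linarith [hzA.1], by linarith [hzA.2]⟩

lemma windowCollapse_preimage_singleton_subset (y : ℝ) :
    windowCollapse s a ⁻¹' {y} ⊆ {y, y + a} := by
  intro z hz
  simp only [windowCollapse, mem_preimage, mem_singleton_iff] at hz
  split_ifs at hz
  · exact Or.inl hz
  · exact Or.inr (show z = y + a by linarith)

instance (ν : Measure ℝ) [NullSingletonClass ν] : NullSingletonClass (ν.removeWindow s a) :=
  ⟨fun y => by
    rw [removeWindow_apply ν (measurableSet_singleton y)]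
    exact measure_mono_null (sdiff_subset.trans (windowCollapse_preimage_singleton_subset y))
      ((toFinite _).measure_zero ν)⟩

lemma removeWindow_volume (ha : 0 ≤ a) : volume.removeWindow s a = volume := by
  have hlow : (volume.restrict (Iic s)).map (windowCollapse s a) = volume.restrict (Iic s) := by
    rw [Measure.map_congr (g := id) ?_, Measure.map_id]
    filter_upwards [ae_restrict_mem measurableSet_Iic] with z hz using if_pos hz
  have hup :
      (volume.restrict (Ioi (s + a))).map (windowCollapse s a) = volume.restrict (Ioi s) := by
    rw [Measure.map_congr (g := fun z => z - a) ?_]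
    · have hpre : (fun z => z - a) ⁻¹' Ioi s = Ioi (s + a) := by
        ext z; simp only [mem_preimage, mem_Ioi]; constructor <;> intro h <;> linarith
      rw [← hpre, ← Measure.restrict_map (measurable_sub_const a) measurableSet_Ioi,
        map_sub_right_eq_self]
    filter_upwards [ae_restrict_mem measurableSet_Ioi] with z hz
    exact if_neg (by simp only [mem_Ioi] at hz; linarith)
  rw [Measure.removeWindow, compl_Ioc,
    Measure.restrict_union (Iic_disjoint_Ioi (by linarith)) measurableSet_Ioi,
    Measure.map_add _ _ measurable_windowCollapse, hlow, hup, ← compl_Iic,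
    Measure.restrict_add_restrict_compl measurableSet_Iic]

end RemoveWindow

lemma ContinuousOn.exists_mem_Icc_le_and_eq_or_eq_right {φ : ℝ → ℝ} {M m : ℝ}
    (hφ : ContinuousOn φ (Icc 0 M)) (hM : 0 ≤ M) (h0 : m ≤ φ 0) :
    ∃ s ∈ Icc 0 M, m ≤ φ s ∧ (φ s = m ∨ s = M) := by
  by_cases h : ∃ r ∈ Icc 0 M, φ r ≤ m
  · obtain ⟨r, hr, hφr⟩ := h
    obtain ⟨s, hs, hφs⟩ := intermediate_value_Icc' hr.1 (hφ.mono (Icc_subset_Icc le_rfl hr.2))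
      ⟨hφr, h0⟩
    exact ⟨s, ⟨hs.1, hs.2.trans hr.2⟩, hφs.ge, Or.inl hφs⟩
  · push Not at h
    exact ⟨M, ⟨hM, le_rfl⟩, (h M ⟨hM, le_rfl⟩).le, Or.inr rfl⟩

lemma Fin.pairwise_cons {α : Type*} {k : ℕ} {r : α → α → Prop} [Std.Symm r] {x : α}
    {f : Fin k → α} (hx : ∀ j, r x (f j)) (hf : Pairwise (r on f)) :
    Pairwise (r on (Fin.cons x f : Fin (k + 1) → α)) := by
  intro i j hij
  cases i using Fin.cases with
  | zero =>
    cases j using Fin.cases with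
    | zero => exact absurd rfl hij
    | succ j => exact hx j
  | succ i =>
    cases j using Fin.cases with
    | zero => exact symm (hx i)
    | succ j => exact hf (fun h => hij (congrArg Fin.succ h))

structure IsFairSplit {k : ℕ} (ν : Measure ℝ) (m : ℝ) (a : Fin k → ℝ) (K : Fin k → Set ℝ) :
    Prop where
  measurableSet : ∀ j, MeasurableSet (K j)
  pairwise_disjoint : Pairwise (Disjoint on K)
  subset : ∀ j, K j ⊆ Ioc 0 (∑ i, a i)
  volume_real : ∀ j, volume.real (K j) = a j
  le_measureReal : ∀ j, m ≤ ν.real (K j)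

section FairSplit

variable {k : ℕ} {ν : Measure ℝ} {m : ℝ} {a : Fin (k + 1) → ℝ} {s : ℝ}

lemma le_removeWindow_prefixSum [IsFiniteMeasure ν] (ha : Monotone a) (ha0 : ∀ i, 0 ≤ a i)
    (hs : s ∈ Icc 0 (∑ i, Fin.tail a i))
    (hwin : ν.real (Ioc s (s + a 0)) = m ∨ s = ∑ i, Fin.tail a i)
    (hm : ∀ t : Fin (k + 1), ((t : ℕ) + 1) * m ≤ ν.real (Ioc 0 (prefixSum a t))) (t : Fin k) :
    ((t : ℕ) + 1) * m ≤ (ν.removeWindow s (a 0)).real (Ioc 0 (prefixSum (Fin.tail a) t)) := by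
  rw [removeWindow_real_apply ν measurableSet_Ioc]
  by_cases hP : prefixSum (Fin.tail a) t ≤ s
  · rw [windowCollapse_preimage_Ioc_of_le hP]
    calc ((t : ℕ) + 1) * m ≤ ν.real (Ioc 0 (prefixSum a t.castSucc)) := by
          simpa using hm t.castSucc
      _ ≤ ν.real (Ioc 0 (prefixSum (Fin.tail a) t)) :=
          measureReal_mono (Ioc_subset_Ioc_right (prefixSum_castSucc_le_tail ha t))
  · have hwin : ν.real (Ioc s (s + a 0)) = m := hwin.resolve_right fun h =>
      hP (h ▸ prefixSum_le_sum (fun i => ha0 i.succ) t)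
    have hsucc := hm t.succ
    rw [prefixSum_succ, Fin.val_succ, Nat.cast_succ] at hsucc
    rw [windowCollapse_preimage_Ioc_of_lt hs.1 (ha0 0) (not_le.mp hP),
      measureReal_sdiff (Ioc_subset_Ioc hs.1 (by linarith)) measurableSet_Ioc, hwin,
      add_comm (prefixSum _ t)]
    linarith

lemma IsFairSplit.cons {K : Fin k → Set ℝ} (ha0 : ∀ i, 0 ≤ a i)
    (hs : s ∈ Icc 0 (∑ i, Fin.tail a i)) (hwin : m ≤ ν.real (Ioc s (s + a 0)))
    (hK : IsFairSplit (ν.removeWindow s (a 0)) m (Fin.tail a) K) :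
    IsFairSplit ν m a (Fin.cons (Ioc s (s + a 0))
      fun j => windowCollapse s (a 0) ⁻¹' K j \ Ioc s (s + a 0)) := by
  have hsum : ∑ i, a i = a 0 + ∑ i, Fin.tail a i := Fin.sum_univ_succ a
  refine ⟨Fin.forall_fin_succ.2 ⟨measurableSet_Ioc, fun j => ?_⟩,
    Fin.pairwise_cons (fun j => disjoint_sdiff_right) fun i j hij => ?_,
    Fin.forall_fin_succ.2 ⟨?_, fun j => ?_⟩, Fin.forall_fin_succ.2 ⟨?_, fun j => ?_⟩,
    Fin.forall_fin_succ.2 ⟨hwin, fun j => ?_⟩⟩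
  · exact (measurable_windowCollapse (hK.measurableSet j)).diff measurableSet_Ioc
  · exact ((hK.pairwise_disjoint hij).preimage _).mono sdiff_subset sdiff_subset
  · exact hsum ▸ Ioc_subset_Ioc hs.1 (by linarith [hs.2])
  · exact hsum ▸ add_comm (∑ i, Fin.tail a i) (a 0) ▸
      windowCollapse_preimage_sdiff_subset hs.1 (ha0 0) (hK.subset j)
  · simpa [Real.volume_real_Ioc] using ha0 0
  · rw [Fin.cons_succ, ← removeWindow_real_apply volume (hK.measurableSet j),
      removeWindow_volume (ha0 0), hK.volume_real j, Fin.tail]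
  · rw [Fin.cons_succ, ← removeWindow_real_apply ν (hK.measurableSet j)]
    exact hK.le_measureReal j

end FairSplit

theorem exists_isFairSplit (ν : Measure ℝ) [IsFiniteMeasure ν] [NullSingletonClass ν] {k : ℕ}
    {a : Fin k → ℝ} (ha : Monotone a) (ha0 : ∀ i, 0 ≤ a i) {m : ℝ}
    (hm : ∀ t : Fin k, ((t : ℕ) + 1) * m ≤ ν.real (Ioc 0 (prefixSum a t))) :
    ∃ K, IsFairSplit ν m a K := by
  induction k generalizing ν with
  | zero => exact ⟨finZeroElim, ⟨finZeroElim, finZeroElim, finZeroElim, finZeroElim, finZeroElim⟩⟩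
  | succ k ih =>
    have hstart : m ≤ ν.real (Ioc 0 (0 + a 0)) := by simpa [prefixSum_zero] using hm 0
    obtain ⟨s, hs, hwin, hexact⟩ :=
      (continuous_measureReal_Ioc_add ν (ha0 0)).continuousOn.exists_mem_Icc_le_and_eq_or_eq_right
        (Finset.sum_nonneg fun i _ => ha0 (Fin.succ i)) hstart
    obtain ⟨K, hK⟩ := ih (ν.removeWindow s (a 0)) (ha.comp Fin.strictMono_succ.monotone)
      (fun i => ha0 i.succ) (le_removeWindow_prefixSum ha ha0 hs hexact hm)
    exact ⟨_, hK.cons ha0 hs hwin⟩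

lemma nonneg_of_monotone_of_prefixSum_pos {k : ℕ} {a : Fin k → ℝ} (ha : Monotone a)
    (hpos : ∀ t, 0 < prefixSum a t) (i : Fin k) : 0 ≤ a i := by
  cases k with
  | zero => exact i.elim0
  | succ k => exact (prefixSum_zero a ▸ hpos 0).le.trans (ha (Fin.zero_le i))

lemma mul_iInf_div_le {k : ℕ} (f : Fin k → ℝ) (t : Fin k) :
    ((t : ℕ) + 1) * ⨅ s : Fin k, f s / ((s : ℕ) + 1) ≤ f t := by
  rw [← le_div_iff₀' (by positivity)]
  exact ciInf_le (Set.finite_range _).bddBelow t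

lemma measureReal_inter_Iio_of_subset_Iic (μ : Measure ℝ) [NullSingletonClass μ] {K : Set ℝ}
    {c : ℝ} (hK : K ⊆ Iic c) : μ.real (K ∩ Iio c) = μ.real K := by
  rw [measureReal_congr ((ae_eq_refl K).inter Iio_ae_eq_Iic), inter_eq_left.2 hK]

theorem tightness_region_construction_general
    {d : ℕ} (σ : ℝ) (hσ : 0 < σ) (x : Fin d → ℝ)
    (k : ℕ)
    (pl : ℝ) (hpl : pl ∈ Set.Ioo (0 : ℝ) 1)
    (pbar : Fin k → ℝ) (hmono : Monotone pbar)
    (pS : Fin k → ℝ)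
    (hpS : ∀ t, pS t = ∑ j ∈ Finset.univ.filter (fun j => j ≤ t), pbar j)
    (hpS01 : ∀ t, pS t ∈ Set.Ioo (0 : ℝ) 1)
    (hsum : pl + ∑ j, pbar j ≤ 1)
    (δ : Fin d → ℝ) (hδ0 : δ ≠ 0) :
    ∃ C : Fin k → Set (Fin d → ℝ),
      (∀ j, MeasurableSet (C j)) ∧
      (Pairwise fun i j => Disjoint (C i) (C j)) ∧
      (∀ j, C j ⊆ {z | dotp δ (z - x) ≤ σ * l2norm δ * PhiInv pl}ᶜ) ∧
      (∀ j, (gaussianVec x σ (C j)).toReal = pbar j) ∧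
      (∀ j, (⨅ t : Fin k,
          (gaussianVec (x + δ) σ
            {z | σ * l2norm δ * PhiInv (1 - pS t) ≤ dotp δ (z - x)}).toReal
              / ((t : ℕ) + 1))
        ≤ (gaussianVec (x + δ) σ (C j)).toReal) := by
  obtain rfl : pS = prefixSum pbar := funext hpS
  simp only [← measureReal_def]
  have hs : 0 < σ * l2norm δ := mul_pos hσ (l2norm_pos hδ0)
  have := nullSingletonClass_map_upperTail (x := x) hs (x + δ)
  have hB t := upperTail_preimage_Ioc (x := x) hs (hpS01 t)
  obtain ⟨K, hK⟩ := exists_isFairSplit ((gaussianVec (x + δ) σ).map (upperTail δ x σ)) hmono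
    (nonneg_of_monotone_of_prefixSum_pos hmono fun t => (hpS01 t).1) fun t => by
      rw [map_measureReal_apply measurable_upperTail measurableSet_Ioc, ← hB t]
      exact mul_iInf_div_le _ t
  have hK1 j : K j ⊆ Ioc 0 (1 - pl) :=
    (hK.subset j).trans (Ioc_subset_Ioc_right (by linarith))
  have hKmeas j : MeasurableSet (K j ∩ Iio (1 - pl)) := (hK.measurableSet j).inter measurableSet_Iio
  refine ⟨fun j => upperTail δ x σ ⁻¹' (K j ∩ Iio (1 - pl)),
    fun j => measurable_upperTail (hKmeas j),
    fun i j hij => ((hK.pairwise_disjoint hij).mono inter_subset_left inter_subset_left).preimage _,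
    fun j z hz => notMem_of_upperTail_lt hs hpl hz.2, fun j => ?_, fun j => ?_⟩
  · rw [measureReal_upperTail_preimage hs (hKmeas j) (inter_subset_left.trans
        ((hK1 j).trans (Ioc_subset_Ioc_right (by linarith [hpl.1])))),
      measureReal_inter_Iio_of_subset_Iic _ ((hK1 j).trans Ioc_subset_Iic_self), hK.volume_real j]
  · rw [← map_measureReal_apply measurable_upperTail (hKmeas j),
      measureReal_inter_Iio_of_subset_Iic _ ((hK1 j).trans Ioc_subset_Iic_self)]
    exact hK.le_measureReal j

/-- Lemma 4 of the paper (key construction for tightness): if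
p̲_l + Σ_j p̄_{b_j} ≤ 1 and R_l solves the certified-radius equation, then for
every δ ≠ 0 with ‖δ‖₂ > R_l there are k pairwise disjoint measurable sets
C₀,…,C_{k-1} contained in the complement of
A_l = {z : δᵀ(z−x) ≤ σ‖δ‖₂Φ⁻¹(p̲_l)} with Pr(X ∈ C_j) = p̄_{b_j} and
Pr(Y ∈ C_j) ≥ min_{1≤t≤k} Pr(Y ∈ B_{S_t})/t, where
B_{S_t} = {z : δᵀ(z−x) ≥ σ‖δ‖₂Φ⁻¹(1−p̄_{S_t})}. -/
theorem tightness_region_construction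
    {d : ℕ} (hd : 1 ≤ d) (σ : ℝ) (hσ : 0 < σ) (x : Fin d → ℝ)
    (k : ℕ) (hk : 1 ≤ k)
    (pl : ℝ) (hpl : pl ∈ Set.Ioo (0 : ℝ) 1)
    (pbar : Fin k → ℝ) (hmono : Monotone pbar)
    (pS : Fin k → ℝ)
    (hpS : ∀ t, pS t = ∑ j ∈ Finset.univ.filter (fun j => j ≤ t), pbar j)
    (hpS01 : ∀ t, pS t ∈ Set.Ioo (0 : ℝ) 1)
    (hsum : pl + ∑ j, pbar j ≤ 1)
    (R : ℝ)
    (hR : Phi (PhiInv pl - R / σ) -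
      (⨅ t : Fin k, Phi (PhiInv (pS t) + R / σ) / ((t : ℕ) + 1)) = 0)
    (δ : Fin d → ℝ) (hδ0 : δ ≠ 0) (hδ : R < l2norm δ) :
    ∃ C : Fin k → Set (Fin d → ℝ),
      (∀ j, MeasurableSet (C j)) ∧
      (Pairwise fun i j => Disjoint (C i) (C j)) ∧
      (∀ j, C j ⊆ {z | dotp δ (z - x) ≤ σ * l2norm δ * PhiInv pl}ᶜ) ∧
      (∀ j, (gaussianVec x σ (C j)).toReal = pbar j) ∧
      (∀ j, (⨅ t : Fin k,
          (gaussianVec (x + δ) σ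
            {z | σ * l2norm δ * PhiInv (1 - pS t) ≤ dotp δ (z - x)}).toReal
              / ((t : ℕ) + 1))
        ≤ (gaussianVec (x + δ) σ (C j)).toReal) :=
  tightness_region_construction_general σ hσ x k pl hpl pbar hmono pS hpS hpS01 hsum δ hδ0
end

section
/- Let m ≥ 1 be an integer, α ∈ [0,1), and ρ ∈ (0,1). Let z_1,…,z_m ∈ {0,1} be fixed and let Y_1,…,Y_m be independent {0,1}-valued random variables such that Pr(Y_i = 1) ≤ α whenever z_i = 0. Then with probability at least 1 − ρ, (1/m)·Σ_{i=1}^m z_i ≥ (1/(1−α))·( (1/m)·Σ_{i=1}^m Y_i − α − √(2α(1−α)·ln(1/ρ)/m) − ln(1/ρ)/(3m) ). -/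
/-!
Let `S` be the set of indices with `z i = 0`. Since `Y i ≤ 1 = z i` off `S`, a failure of the
bound forces `∑ i ∈ S, Y i` to exceed `α |S| + √(2 m α (1 - α) L) + L / 3`, where `L = log (1/ρ)`.
This is Bernstein's inequality for a sum of independent Bernoulli variables of means at most `α`,
proved by the Chernoff method: the centred log-mgf of a Bernoulli(`α`) variable is at most
`α (1 - α) (eᵗ - 1 - t)`, and `eᵗ - 1 - t ≤ t² / (2 (1 - t/3))` for `0 ≤ t < 3`; with the usual
choice of `t` the tail bound is exactly `e^{-L} = ρ`.
-/

open MeasureTheory ProbabilityTheory Real Finset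

lemma monotoneOn_Ici_of_hasDerivAt_nonneg {f f' : ℝ → ℝ} {a : ℝ}
    (hf : ∀ x, a ≤ x → HasDerivAt f (f' x) x) (hf' : ∀ x, a ≤ x → 0 ≤ f' x) :
    MonotoneOn f (Set.Ici a) :=
  monotoneOn_of_hasDerivWithinAt_nonneg (convex_Ici a)
    (fun x hx => (hf x hx).continuousAt.continuousWithinAt)
    (fun x hx => (hf x (interior_subset hx)).hasDerivWithinAt)
    (fun x hx => hf' x (interior_subset hx))

lemma exp_sub_one_sub_le {x : ℝ} (hx₀ : 0 ≤ x) (hx₃ : x < 3) :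
    exp x - 1 - x ≤ x ^ 2 / (2 * (1 - x / 3)) := by
  have hd₁ (y : ℝ) (_ : 0 ≤ y) :
      HasDerivAt (fun y => y ^ 2 / 2 - (exp y - 1 - y) * (1 - y / 3))
        ((y + 2 + (y - 2) * exp y) / 3) y :=
    (((hasDerivAt_pow 2 y).div_const 2).sub ((((hasDerivAt_exp y).sub_const 1).sub
      (hasDerivAt_id' y)).mul (((hasDerivAt_id' y).div_const 3).const_sub 1))).congr_deriv
      (by norm_num; ring)
  have hd₂ (y : ℝ) (_ : 0 ≤ y) :
      HasDerivAt (fun y => (y + 2 + (y - 2) * exp y) / 3) ((1 + (y - 1) * exp y) / 3) y :=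
    ((((hasDerivAt_id' y).add_const 2).add (((hasDerivAt_id' y).sub_const 2).mul
      (hasDerivAt_exp y))).div_const 3).congr_deriv (by ring)
  -- `(1 - y) eʸ ≤ e⁻ʸ eʸ = 1`
  have h₂ (y : ℝ) (_ : 0 ≤ y) : 0 ≤ (1 + (y - 1) * exp y) / 3 := by
    have h := mul_le_mul_of_nonneg_right (add_one_le_exp (-y)) (exp_pos y).le
    rw [← exp_add, neg_add_cancel, exp_zero] at h
    linarith
  have h₁ (y : ℝ) (hy : 0 ≤ y) : 0 ≤ (y + 2 + (y - 2) * exp y) / 3 := by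
    simpa using monotoneOn_Ici_of_hasDerivAt_nonneg hd₂ h₂ Set.self_mem_Ici hy hy
  have h₀ := monotoneOn_Ici_of_hasDerivAt_nonneg hd₁ h₁ Set.self_mem_Ici hx₀ hx₀
  norm_num at h₀
  rw [le_div_iff₀ (by linarith)]
  nlinarith

lemma one_add_mul_exp_sub_one_le_exp {a t : ℝ} (ha₀ : 0 ≤ a) (ha₁ : a ≤ 1) (ht : 0 ≤ t) :
    1 + a * (exp t - 1) ≤ exp (a * t + a * (1 - a) * (exp t - 1 - t)) := by
  have hpos (y : ℝ) (hy : 0 ≤ y) : 0 < 1 + a * (exp y - 1) := by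
    nlinarith [one_le_exp hy]
  have hd (y : ℝ) (hy : 0 ≤ y) : HasDerivAt
      (fun y => a * y + a * (1 - a) * (exp y - 1 - y) - log (1 + a * (exp y - 1)))
      (a ^ 2 * (1 - a) * (exp y - 1) ^ 2 / (1 + a * (exp y - 1))) y := by
    refine ((((hasDerivAt_id' y).const_mul a).add ((((hasDerivAt_exp y).sub_const 1).sub
      (hasDerivAt_id' y)).const_mul (a * (1 - a)))).sub
      (((((hasDerivAt_exp y).sub_const 1).const_mul a).const_add 1).log
        (hpos y hy).ne')).congr_deriv ?_
    field_simp [(hpos y hy).ne']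
    ring
  have hg := monotoneOn_Ici_of_hasDerivAt_nonneg hd
    (fun y hy => div_nonneg (by have := sub_nonneg.2 ha₁; positivity) (hpos y hy).le)
    Set.self_mem_Ici ht ht
  rw [← log_le_iff_le_exp (hpos t ht)]
  simpa using hg

lemma exists_bernstein_exponent {v L : ℝ} (hv : 0 ≤ v) (hL : 0 ≤ L) :
    ∃ t, 0 ≤ t ∧ v * (exp t - 1 - t) ≤ t * (sqrt (2 * v * L) + L / 3) - L := by
  rcases hv.eq_or_lt with rfl | hv
  · exact ⟨3, by norm_num, by simp; linarith⟩
  obtain ⟨a, ha, rfl⟩ : ∃ a, 0 < a ∧ v = a ^ 2 := ⟨sqrt v, sqrt_pos.2 hv, (sq_sqrt hv.le).symm⟩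
  obtain ⟨b, hb, rfl⟩ : ∃ b, 0 ≤ b ∧ L = b ^ 2 / 2 :=
    ⟨sqrt (2 * L), sqrt_nonneg _, by rw [sq_sqrt (by linarith)]; ring⟩
  have hab : sqrt (2 * a ^ 2 * (b ^ 2 / 2)) = a * b := by
    rw [show 2 * a ^ 2 * (b ^ 2 / 2) = (a * b) ^ 2 by ring, sqrt_sq (by positivity)]
  have hden : 0 < 3 * a + b := by positivity
  have ht₃ : 3 * b / (3 * a + b) < 3 := by rw [div_lt_iff₀ hden]; linarith
  -- for this `t`, the bound of `exp_sub_one_sub_le` makes the inequality an identity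
  refine ⟨3 * b / (3 * a + b), by positivity, ?_⟩
  calc a ^ 2 * (exp (3 * b / (3 * a + b)) - 1 - 3 * b / (3 * a + b))
      ≤ a ^ 2 * ((3 * b / (3 * a + b)) ^ 2 / (2 * (1 - 3 * b / (3 * a + b) / 3))) :=
        mul_le_mul_of_nonneg_left (exp_sub_one_sub_le (by positivity) ht₃) (sq_nonneg a)
    _ = _ := by
        rw [hab]
        field_simp
        ring

lemma sum_le_sum_filter_add_sum {ι : Type*} [Fintype ι] {y z : ι → ℝ}
    (hz : ∀ i, z i = 0 ∨ z i = 1) (hy : ∀ i, y i ≤ 1) :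
    ∑ i, y i ≤ ∑ i with z i = 0, y i + ∑ i, z i := by
  rw [sum_filter, ← sum_add_distrib]
  refine sum_le_sum fun i _ => ?_
  rcases hz i with h | h <;> simp [h, hy i]

lemma sum_add_card_filter_eq_zero {ι : Type*} [Fintype ι] {z : ι → ℝ}
    (hz : ∀ i, z i = 0 ∨ z i = 1) :
    ∑ i, z i + #{i | z i = 0} = Fintype.card ι := by
  rw [natCast_card_filter, ← sum_add_distrib, ← card_univ, cast_card]
  refine sum_congr rfl fun i _ => ?_
  rcases hz i with h | h <;> simp [h]

lemma add_le_sum_filter_of_lt {m : ℕ} (hm : 0 < m) {y z : Fin m → ℝ}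
    (hz : ∀ i, z i = 0 ∨ z i = 1) (hy : ∀ i, y i ≤ 1) {α q L : ℝ} (hα : α < 1)
    (h : 1 / (m : ℝ) * ∑ i, z i < 1 / (1 - α) * (1 / (m : ℝ) * ∑ i, y i - α - q - L / (3 * m))) :
    α * #{i | z i = 0} + (m * q + L / 3) ≤ ∑ i with z i = 0, y i := by
  have hα₁ : 0 < 1 - α := sub_pos.2 hα
  have hm₀ : (0 : ℝ) < m := by exact_mod_cast hm
  have hcount := sum_add_card_filter_eq_zero hz
  rw [Fintype.card_fin] at hcount
  have h := sub_pos.2 h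
  field_simp at h
  linear_combination sum_le_sum_filter_add_sum hz hy + h / 3 + α * hcount

section Bernoulli

variable {Ω ι : Type*} [MeasurableSpace Ω] {P : Measure Ω} [IsProbabilityMeasure P]

lemma mgf_of_eq_zero_or_eq_one {X : Ω → ℝ} (hX : Measurable X)
    (hX01 : ∀ ω, X ω = 0 ∨ X ω = 1) (t : ℝ) :
    mgf X P t = 1 + (exp t - 1) * P.real {ω | X ω = 1} := by
  have hset : MeasurableSet {ω | X ω = 1} := hX (measurableSet_singleton 1)
  have hexp : (fun ω => exp (t * X ω))
      = fun ω => 1 + (exp t - 1) * Set.indicator {ω | X ω = 1} 1 ω := by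
    funext ω
    rcases hX01 ω with h | h <;> simp [h, Set.indicator]
  rw [mgf, hexp, integral_add (integrable_const 1)
    (((integrable_indicator_iff hset).2 (integrable_const 1).integrableOn).const_mul _),
    integral_const_mul, integral_indicator_one hset]
  simp

lemma mgf_sum_le_of_eq_zero_or_eq_one {Y : ι → Ω → ℝ} (hmeas : ∀ i, Measurable (Y i))
    (h01 : ∀ i ω, Y i ω = 0 ∨ Y i ω = 1) (hindep : iIndepFun Y P) {S : Finset ι} {α t : ℝ}
    (hα₀ : 0 ≤ α) (hα₁ : α ≤ 1) (hp : ∀ i ∈ S, P.real {ω | Y i ω = 1} ≤ α) (ht : 0 ≤ t) :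
    mgf (∑ i ∈ S, Y i) P t ≤ exp (#S * (α * t + α * (1 - α) * (exp t - 1 - t))) := by
  rw [hindep.mgf_sum hmeas, exp_nat_mul, ← prod_const]
  refine prod_le_prod (fun i _ => mgf_nonneg) fun i hi => ?_
  calc mgf (Y i) P t = 1 + (exp t - 1) * P.real {ω | Y i ω = 1} :=
        mgf_of_eq_zero_or_eq_one (hmeas i) (h01 i) t
    _ ≤ 1 + α * (exp t - 1) := by
        rw [mul_comm]
        gcongr
        · linarith [add_one_le_exp t]
        · exact hp i hi
    _ ≤ _ := one_add_mul_exp_sub_one_le_exp hα₀ hα₁ ht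

theorem measureReal_sum_ge_le_exp_neg {Y : ι → Ω → ℝ} (hmeas : ∀ i, Measurable (Y i))
    (h01 : ∀ i ω, Y i ω = 0 ∨ Y i ω = 1) (hindep : iIndepFun Y P) {S : Finset ι} {α v L : ℝ}
    (hα₀ : 0 ≤ α) (hα₁ : α ≤ 1) (hp : ∀ i ∈ S, P.real {ω | Y i ω = 1} ≤ α)
    (hv : #S * (α * (1 - α)) ≤ v) (hL : 0 ≤ L) :
    P.real {ω | α * #S + (sqrt (2 * v * L) + L / 3) ≤ ∑ i ∈ S, Y i ω} ≤ exp (-L) := by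
  have hvar : 0 ≤ α * (1 - α) := mul_nonneg hα₀ (by linarith)
  obtain ⟨t, ht, hbound⟩ :=
    exists_bernstein_exponent ((mul_nonneg (Nat.cast_nonneg _) hvar).trans hv) hL
  have hint : Integrable (fun ω => exp (t * (∑ i ∈ S, Y i) ω)) P :=
    hindep.integrable_exp_mul_sum hmeas fun i _ =>
      integrable_exp_mul_of_le t 1 ht (hmeas i).aemeasurable
        (ae_of_all _ fun ω => by rcases h01 i ω with h | h <;> simp [h])
  have hchernoff := measure_ge_le_exp_mul_mgf (α * #S + (sqrt (2 * v * L) + L / 3)) ht hint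
  simp only [Finset.sum_apply] at hchernoff
  refine hchernoff.trans ?_
  calc _ ≤ exp (-t * (α * #S + (sqrt (2 * v * L) + L / 3))) *
        exp (#S * (α * t + α * (1 - α) * (exp t - 1 - t))) := by
          gcongr
          exact mgf_sum_le_of_eq_zero_or_eq_one hmeas h01 hindep hα₀ hα₁ hp ht
    _ ≤ exp (-L) := by
          rw [← exp_add, exp_le_exp]
          nlinarith [add_one_le_exp t]

end Bernoulli

/-- The concentration lemma (Lemma 11 of the paper, from Cohen et al.) used to
convert approximate certified top-k accuracy into a high-probability lower
bound on the true certified top-k accuracy: if z₁,…,z_m ∈ {0,1} are fixed and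
Y₁,…,Y_m are independent {0,1}-valued random variables with Pr(Y_i = 1) ≤ α
whenever z_i = 0, then with probability at least 1 − ρ,
(1/m)Σ z_i ≥ (1/(1−α))·((1/m)Σ Y_i − α − √(2α(1−α)ln(1/ρ)/m) − ln(1/ρ)/(3m)). -/
theorem certified_accuracy_concentration
    {Ω : Type*} [MeasurableSpace Ω] (P : Measure Ω) [IsProbabilityMeasure P]
    (m : ℕ) (hm : 1 ≤ m) (α : ℝ) (hα : α ∈ Set.Ico (0 : ℝ) 1)
    (ρ : ℝ) (hρ : ρ ∈ Set.Ioo (0 : ℝ) 1)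
    (z : Fin m → ℝ) (hz : ∀ i, z i = 0 ∨ z i = 1)
    (Y : Fin m → Ω → ℝ) (hYmeas : ∀ i, Measurable (Y i))
    (hYval : ∀ i ω, Y i ω = 0 ∨ Y i ω = 1)
    (hYindep : iIndepFun Y P)
    (hYbound : ∀ i, z i = 0 → (P {ω | Y i ω = 1}).toReal ≤ α) :
    1 - ρ ≤ (P {ω |
      (1 / (1 - α)) * ((1 / (m : ℝ)) * (∑ i, Y i ω) - α
        - Real.sqrt (2 * α * (1 - α) * Real.log (1 / ρ) / (m : ℝ))
        - Real.log (1 / ρ) / (3 * (m : ℝ)))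
      ≤ (1 / (m : ℝ)) * ∑ i, z i}).toReal := by
  set L := log (1 / ρ)
  set good := {ω | (1 / (1 - α)) * ((1 / (m : ℝ)) * (∑ i, Y i ω) - α
    - sqrt (2 * α * (1 - α) * L / m) - L / (3 * m)) ≤ (1 / (m : ℝ)) * ∑ i, z i}
  have hm₀ : (0 : ℝ) < m := by exact_mod_cast hm
  have hρL : exp (-L) = ρ := by simp only [L, one_div, log_inv, neg_neg, exp_log hρ.1]
  have hsqrt : (m : ℝ) * sqrt (2 * α * (1 - α) * L / m) = sqrt (2 * (m * (α * (1 - α))) * L) := by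
    rw [show 2 * (m * (α * (1 - α))) * L = m ^ 2 * (2 * α * (1 - α) * L / m) by field_simp,
      sqrt_mul (sq_nonneg _), sqrt_sq hm₀.le]
  have hcard : (#{i | z i = 0} : ℝ) ≤ m := by
    exact_mod_cast (card_le_univ _).trans_eq (Fintype.card_fin m)
  have htail := measureReal_sum_ge_le_exp_neg hYmeas hYval hYindep hα.1 hα.2.le
    (S := {i | z i = 0}) (fun i hi => hYbound i (mem_filter.1 hi).2)
    (mul_le_mul_of_nonneg_right hcard (mul_nonneg hα.1 (sub_nonneg.2 hα.2.le)))
    (log_nonneg (one_le_one_div hρ.1 hρ.2.le))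
  have hbad : goodᶜ ⊆ {ω | α * #{i | z i = 0} + (sqrt (2 * (m * (α * (1 - α))) * L) + L / 3)
      ≤ ∑ i with z i = 0, Y i ω} := fun ω (hω : ¬ _ ≤ (_ : ℝ)) => by
    have hy (i : Fin m) : Y i ω ≤ 1 := by rcases hYval i ω with h | h <;> simp [h]
    rw [Set.mem_ofPred_eq, ← hsqrt]
    exact add_le_sum_filter_of_lt hm hz hy hα.2 (not_le.1 hω)
  have hcover : 1 ≤ P.real good + P.real goodᶜ := by
    simpa [Set.union_compl_self] using measureReal_union_le (μ := P) good goodᶜ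
  change 1 - ρ ≤ P.real good
  calc 1 - ρ = 1 - exp (-L) := by rw [hρL]
    _ ≤ 1 - P.real goodᶜ := by gcongr; exact (measureReal_mono hbad).trans htail
    _ ≤ P.real good := by linarith
end
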